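/- Let (Ū₊, ρ̄₊) be the background subsonic solution on [r_s, r₂] of the ODE system (ρ̄Ū)'(r) + ρ̄Ū/r = 0, ρ̄ŪŪ' + P̄' = 0 with P̄ = S̄₊ρ̄^γ, with constants S̄₊ > 0 and κ̄. Then the coefficients d(y₁) = 1 − κ̄²ρ̄₊ + κ̄²ρ̄₊M̄₊² and d₃(y₁) = (B̄ − Ū₊²/2)/(γS̄₊Ū₊) + κ̄²ρ̄₊Ū₊/((γ−1)S̄₊) satisfy, for all y₁ ∈ [r_s, r₂], the derivative identities d'(y₁) = ((3 + (γ−2)M̄₊²)/(y₁(M̄₊² − 1)))ρ̄₊κ̄²M̄₊² = −ρ̄₊κ̄²d₂(y₁) − (1/y₁)ρ̄₊κ̄²M̄₊² and d₃'(y₁) = (2B̄ + Ū₊²)/(2y₁(1 − M̄₊²)γS̄₊Ū₊) − κ̄²ρ̄₊Ū₊/(y₁S̄₊(γ−1)) = d₃/(y₁d₁) − (κ̄²ρ̄₊Ū₊/((γ−1)S̄₊))(1/y₁)(1 + 1/d₁) + (1/(y₁d₁))(Ū₊/(γS̄₊)), where d₁ = 1 − M̄₊² and d₂ = M̄₊²(2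 + (γ−1)M̄₊²)/(y₁(1 − M̄₊²)). -/

import Mathlib

noncomputable section

/-- The squared Mach number of the background flow. -/
def Mach2 (γ Sp : ℝ) (Up ρp : ℝ → ℝ) (t : ℝ) : ℝ :=
  Up t ^ 2 / (γ * Sp * ρp t ^ (γ - 1))

/-- The Bernoulli quantity of the background flow. -/
def BernB (γ Sp : ℝ) (Up ρp : ℝ → ℝ) (t : ℝ) : ℝ :=
  Up t ^ 2 / 2 + γ * Sp * ρp t ^ (γ - 1) / (γ - 1)

/-- `d₁ = 1 - M̄₊²`. -/
def dOne (γ Sp : ℝ) (Up ρp : ℝ → ℝ) (t : ℝ) : ℝ := 1 - Mach2 γ Sp Up ρp t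

/-- `d₂ = M̄₊²(2 + (γ-1)M̄₊²)/(y₁(1 - M̄₊²))`. -/
def dTwo (γ Sp : ℝ) (Up ρp : ℝ → ℝ) (t : ℝ) : ℝ :=
  Mach2 γ Sp Up ρp t * (2 + (γ - 1) * Mach2 γ Sp Up ρp t)
    / (t * (1 - Mach2 γ Sp Up ρp t))

/-- `d₀ = 1 - κ̄²ρ̄₊`. -/
def dZero (κ : ℝ) (ρp : ℝ → ℝ) (t : ℝ) : ℝ := 1 - κ ^ 2 * ρp t

/-- `d = 1 - κ̄²ρ̄₊ + κ̄²ρ̄₊M̄₊²`. -/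
def dCoef (γ Sp κ : ℝ) (Up ρp : ℝ → ℝ) (t : ℝ) : ℝ :=
  1 - κ ^ 2 * ρp t + κ ^ 2 * ρp t * Mach2 γ Sp Up ρp t

/-- `d₃ = (B̄ - Ū₊²/2)/(γS̄₊Ū₊) + κ̄²ρ̄₊Ū₊/((γ-1)S̄₊)`. -/
def dThree (γ Sp κ : ℝ) (Up ρp : ℝ → ℝ) (t : ℝ) : ℝ :=
  (BernB γ Sp Up ρp t - Up t ^ 2 / 2) / (γ * Sp * Up t)
    + κ ^ 2 * (ρp t * Up t) / ((γ - 1) * Sp)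

/-- The background ODE system `(ρ̄Ū)' + ρ̄Ū/r = 0`, `ρ̄ŪŪ' + P̄' = 0`, `P̄ = S̄ρ̄^γ`,
with positivity, stated on `[a,b]` with derivatives taken within `[a,b]`. -/
def BackgroundODE (γ Sp a b : ℝ) (Up ρp : ℝ → ℝ) : Prop :=
  ContDiffOn ℝ 1 Up (Set.Icc a b) ∧ ContDiffOn ℝ 1 ρp (Set.Icc a b) ∧
  (∀ r ∈ Set.Icc a b, 0 < ρp r ∧ 0 < Up r) ∧
  (∀ r ∈ Set.Icc a b,
    derivWithin (fun t => ρp t * Up t) (Set.Icc a b) r + ρp r * Up r / r = 0) ∧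
  (∀ r ∈ Set.Icc a b,
    ρp r * Up r * derivWithin Up (Set.Icc a b) r
      + derivWithin (fun t => Sp * ρp t ^ γ) (Set.Icc a b) r = 0)

set_option maxHeartbeats 3200000 in
/-- The derivative identities for the coefficients `d` and `d₃` along the
background subsonic solution on `[r_s, r₂]`. -/
theorem background_coefficient_derivative_identities
    (γ rs r2 Sp κ : ℝ) (Up ρp : ℝ → ℝ)
    (hγ : 1 < γ) (hrs : 0 < rs) (hr : rs < r2) (hS : 0 < Sp)
    (hODE : BackgroundODE γ Sp rs r2 Up ρp)
    (hsub : ∀ r ∈ Set.Icc rs r2, Mach2 γ Sp Up ρp r < 1) :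
    ∀ y ∈ Set.Icc rs r2,
      (derivWithin (dCoef γ Sp κ Up ρp) (Set.Icc rs r2) y
        = (3 + (γ - 2) * Mach2 γ Sp Up ρp y) / (y * (Mach2 γ Sp Up ρp y - 1))
            * (ρp y * κ ^ 2 * Mach2 γ Sp Up ρp y)) ∧
      (derivWithin (dCoef γ Sp κ Up ρp) (Set.Icc rs r2) y
        = -(ρp y * κ ^ 2 * dTwo γ Sp Up ρp y)
            - 1 / y * (ρp y * κ ^ 2 * Mach2 γ Sp Up ρp y)) ∧
      (derivWithin (dThree γ Sp κ Up ρp) (Set.Icc rs r2) y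
        = (2 * BernB γ Sp Up ρp y + Up y ^ 2)
              / (2 * y * (1 - Mach2 γ Sp Up ρp y) * γ * Sp * Up y)
            - κ ^ 2 * ρp y * Up y / (y * Sp * (γ - 1))) ∧
      (derivWithin (dThree γ Sp κ Up ρp) (Set.Icc rs r2) y
        = dThree γ Sp κ Up ρp y / (y * dOne γ Sp Up ρp y)
            - κ ^ 2 * ρp y * Up y / ((γ - 1) * Sp) * (1 / y)
                * (1 + 1 / dOne γ Sp Up ρp y)
            + 1 / (y * dOne γ Sp Up ρp y) * (Up y / (γ * Sp))) := by

  intro y hy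
  obtain ⟨hUc, hρc, hpos, heq1, heq2⟩ := hODE
  have hρy : 0 < ρp y := (hpos y hy).1
  have hUy : 0 < Up y := (hpos y hy).2
  have hy0 : 0 < y := lt_of_lt_of_le hrs hy.1
  have hγ0 : (0:ℝ) < γ := by linarith
  have hγ1 : γ - 1 ≠ 0 := by intro h; nlinarith
  have huniq : UniqueDiffOn ℝ (Set.Icc rs r2) := uniqueDiffOn_Icc hr
  have hyd := huniq y hy
  have hU : HasDerivWithinAt Up (derivWithin Up (Set.Icc rs r2) y) (Set.Icc rs r2) y :=
    ((hUc.differentiableOn one_ne_zero) y hy).hasDerivWithinAt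
  have hρ : HasDerivWithinAt ρp (derivWithin ρp (Set.Icc rs r2) y) (Set.Icc rs r2) y :=
    ((hρc.differentiableOn one_ne_zero) y hy).hasDerivWithinAt
  obtain ⟨u', hU, hu'⟩ : ∃ u', HasDerivWithinAt Up u' (Set.Icc rs r2) y ∧
      derivWithin Up (Set.Icc rs r2) y = u' := ⟨_, hU, rfl⟩
  obtain ⟨p', hρ, hp'⟩ : ∃ p', HasDerivWithinAt ρp p' (Set.Icc rs r2) y ∧
      derivWithin ρp (Set.Icc rs r2) y = p' := ⟨_, hρ, rfl⟩
  set A := ρp y ^ (γ - 1) with hAdef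
  have hA : 0 < A := Real.rpow_pos_of_pos hρy _
  have hc2 : 0 < γ * Sp * A := by positivity
  have hMdef : Mach2 γ Sp Up ρp y = Up y ^ 2 / (γ * Sp * A) := by rw [hAdef]; rfl
  have hMlt : Up y ^ 2 < γ * Sp * A := by
    have h := hsub y hy
    rw [hMdef] at h
    exact (div_lt_one hc2).mp h
  have hgap : (0:ℝ) < γ * Sp * A - Up y ^ 2 := by linarith
  -- equation 1
  have e1 : p' * Up y * y + ρp y * u' * y + ρp y * Up y = 0 := by
    have h := heq1 y hy
    rw [(show derivWithin (fun t => ρp t * Up t) (Set.Icc rs r2) y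
        = p' * Up y + ρp y * u' from (hρ.mul hU).derivWithin hyd)] at h
    field_simp at h
    linarith
  -- equation 2
  have hA' : HasDerivWithinAt (fun t => ρp t ^ (γ - 1))
      (p' * (γ - 1) * ρp y ^ (γ - 1 - 1)) (Set.Icc rs r2) y :=
    hρ.rpow_const (Or.inl hρy.ne')
  have hApow : ρp y ^ (γ - 1 - 1) = A / ρp y := by
    rw [eq_div_iff hρy.ne', hAdef, ← Real.rpow_add_one hρy.ne']
    norm_num
  have e2 : ρp y * Up y * u' + Sp * (γ * A * p') = 0 := by
    have h := heq2 y hy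
    have hd : derivWithin (fun t => Sp * ρp t ^ γ) (Set.Icc rs r2) y
        = Sp * (p' * γ * ρp y ^ (γ - 1)) :=
      ((hρ.rpow_const (Or.inl hρy.ne')).const_mul Sp).derivWithin hyd
    rw [hu', hd, ← hAdef] at h
    linear_combination h
  have hKne : ((γ * Sp * A - Up y ^ 2) * y) ≠ 0 := by positivity
  have hu0 : u' * ((γ * Sp * A - Up y ^ 2) * y) = -(Up y * (γ * Sp * A)) := by
    have key1 : u' * ((γ * Sp * A - Up y ^ 2) * y) * ρp y
        = -(Up y * (γ * Sp * A)) * ρp y := by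
      linear_combination (γ * Sp * A) * e1 - (Up y * y) * e2
    exact mul_right_cancel₀ hρy.ne' key1
  have hu : u' = -(Up y * (γ * Sp * A)) / ((γ * Sp * A - Up y ^ 2) * y) := by
    rw [eq_div_iff hKne]; exact hu0
  have hp : p' = ρp y * Up y ^ 2 / ((γ * Sp * A - Up y ^ 2) * y) := by
    rw [eq_div_iff hKne]
    have key2 : p' * ((γ * Sp * A - Up y ^ 2) * y) * (Sp * (γ * A))
        = ρp y * Up y ^ 2 * (Sp * (γ * A)) := by
      linear_combination ((γ * Sp * A - Up y ^ 2) * y) * e2 - (ρp y * Up y) * hu0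
    exact mul_right_cancel₀ (by positivity : (Sp * (γ * A)) ≠ 0) key2
  -- derivative of Mach2
  have hnum : HasDerivWithinAt (fun t => Up t ^ 2) (2 * Up y * u') (Set.Icc rs r2) y := by
    convert (show HasDerivWithinAt (fun t => Up t ^ 2) (((2:ℕ):ℝ) * Up y ^ (2 - 1) * u') (Set.Icc rs r2) y from hU.fun_pow 2) using 1
    push_cast
    ring
  have hM2 : HasDerivWithinAt (fun t => Mach2 γ Sp Up ρp t)
      ((2 * Up y * u' * (γ * Sp * A)
        - Up y ^ 2 * (γ * Sp * (p' * (γ - 1) * (A / ρp y)))) / (γ * Sp * A) ^ 2)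
      (Set.Icc rs r2) y := by
    have h := hnum.div (hA'.const_mul (γ * Sp))
      (by positivity : γ * Sp * ρp y ^ (γ - 1) ≠ 0)
    rw [hApow, ← hAdef] at h
    exact h
  -- derivative of dCoef
  have hdCval : derivWithin (dCoef γ Sp κ Up ρp) (Set.Icc rs r2) y
      = 0 - κ ^ 2 * p' + (κ ^ 2 * p' * Mach2 γ Sp Up ρp y + κ ^ 2 * ρp y *
          ((2 * Up y * u' * (γ * Sp * A)
            - Up y ^ 2 * (γ * Sp * (p' * (γ - 1) * (A / ρp y)))) / (γ * Sp * A) ^ 2)) := by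
    refine HasDerivWithinAt.derivWithin ?_ hyd
    exact ((hasDerivWithinAt_const y (Set.Icc rs r2) (1:ℝ)).sub
      (hρ.const_mul (κ ^ 2))).add ((hρ.const_mul (κ ^ 2)).mul hM2)
  -- derivative of dThree
  have hBd : HasDerivWithinAt (fun t => BernB γ Sp Up ρp t)
      (2 * Up y * u' / 2 + γ * Sp * (p' * (γ - 1) * (A / ρp y)) / (γ - 1))
      (Set.Icc rs r2) y := by
    have h := (hnum.div_const 2).add ((hA'.const_mul (γ * Sp)).div_const (γ - 1))
    rw [hApow] at h
    exact h
  have hd3val : derivWithin (dThree γ Sp κ Up ρp) (Set.Icc rs r2) y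
      = ((2 * Up y * u' / 2 + γ * Sp * (p' * (γ - 1) * (A / ρp y)) / (γ - 1)
            - 2 * Up y * u' / 2) * (γ * Sp * Up y)
          - (BernB γ Sp Up ρp y - Up y ^ 2 / 2) * (γ * Sp * u')) / (γ * Sp * Up y) ^ 2
        + κ ^ 2 * (p' * Up y + ρp y * u') / ((γ - 1) * Sp) := by
    refine HasDerivWithinAt.derivWithin ?_ hyd
    exact ((hBd.sub (hnum.div_const 2)).div (hU.const_mul (γ * Sp))
      (by positivity : γ * Sp * Up y ≠ 0)).add
      (((hρ.mul hU).const_mul (κ ^ 2)).div_const ((γ - 1) * Sp))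
  have hBdef : BernB γ Sp Up ρp y = Up y ^ 2 / 2 + γ * Sp * A / (γ - 1) := by
    rw [hAdef]; rfl
  have hSne : Sp ≠ 0 := hS.ne'
  have hγne : γ ≠ 0 := hγ0.ne'
  have h1M : 1 - Up y ^ 2 / (γ * Sp * A) ≠ 0 := by
    have : Up y ^ 2 / (γ * Sp * A) < 1 := (div_lt_one hc2).mpr hMlt
    intro hcon
    nlinarith
  have hM1 : Up y ^ 2 / (γ * Sp * A) - 1 ≠ 0 := by
    intro hcon
    apply h1M
    linarith
  have hMlt1 : Mach2 γ Sp Up ρp y < 1 := hsub y hy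
  have h1mne : 1 - Mach2 γ Sp Up ρp y ≠ 0 := sub_ne_zero_of_ne hMlt1.ne'
  have hm1ne : Mach2 γ Sp Up ρp y - 1 ≠ 0 := sub_ne_zero_of_ne hMlt1.ne
  have hD' : derivWithin (dCoef γ Sp κ Up ρp) (Set.Icc rs r2) y * (y * (1 - Mach2 γ Sp Up ρp y))
      = -(κ ^ 2 * ρp y * Mach2 γ Sp Up ρp y * (3 + (γ - 2) * Mach2 γ Sp Up ρp y)) := by
    rw [hdCval, hMdef, hu, hp]
    field_simp [hρy.ne', hUy.ne', hy0.ne', hA.ne', hSne, hγne, hγ1, hgap.ne']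
    ring
  have hDdiv : derivWithin (dCoef γ Sp κ Up ρp) (Set.Icc rs r2) y
      = -(κ ^ 2 * ρp y * Mach2 γ Sp Up ρp y * (3 + (γ - 2) * Mach2 γ Sp Up ρp y))
        / (y * (1 - Mach2 γ Sp Up ρp y)) := by
    rw [eq_div_iff (mul_ne_zero hy0.ne' h1mne)]
    exact hD'
  have hD3' : derivWithin (dThree γ Sp κ Up ρp) (Set.Icc rs r2) y * (y * (1 - Mach2 γ Sp Up ρp y))
      = (2 * BernB γ Sp Up ρp y + Up y ^ 2) / (2 * γ * Sp * Up y)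
        - κ ^ 2 * ρp y * Up y / (Sp * (γ - 1)) * (1 - Mach2 γ Sp Up ρp y) := by
    rw [hd3val, hBdef, hMdef, hu, hp]
    field_simp [hρy.ne', hUy.ne', hy0.ne', hA.ne', hSne, hγne, hγ1, hgap.ne']
    ring
  have hD3div : derivWithin (dThree γ Sp κ Up ρp) (Set.Icc rs r2) y
      = ((2 * BernB γ Sp Up ρp y + Up y ^ 2) / (2 * γ * Sp * Up y)
        - κ ^ 2 * ρp y * Up y / (Sp * (γ - 1)) * (1 - Mach2 γ Sp Up ρp y))
        / (y * (1 - Mach2 γ Sp Up ρp y)) := by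
    rw [eq_div_iff (mul_ne_zero hy0.ne' h1mne)]
    exact hD3'
  refine ⟨?_, ?_, ?_, ?_⟩
  · rw [hDdiv]
    field_simp [hy0.ne', h1mne, hm1ne]
    ring
  · rw [hDdiv]
    simp only [dTwo]
    field_simp [hy0.ne', h1mne, hm1ne]
    ring
  · rw [hD3div]
    field_simp [hy0.ne', h1mne, hUy.ne', hSne, hγne, hγ1]
  · rw [hD3div]
    simp only [dThree, dOne]
    field_simp [hy0.ne', h1mne, hUy.ne', hSne, hγne, hγ1]
    ring
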